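/- Let (Ω, 𝓕, μ) be a probability space, let r < n, and let γ : Ω → Matrix (Fin r) (Fin n) ℝ be measurable with rank γ(ω) = r for μ-a.e. ω. Then there exists a measurable δ : Ω → Matrix (Fin (n−r)) (Fin n) ℝ such that for μ-a.e. ω: (i) rank δ(ω) = n − r; (ii) the row span of δ(ω) is the orthogonal complement in ℝ^n of the row span of γ(ω) (equivalently γ(ω) * (δ(ω))ᵀ = 0); and (iii) the n × n matrix obtained by stacking γ(ω) on top of δ(ω) is invertible. -/

import Mathlib

/-!
For `A` of full row rank put `G = A Aᵀ`. The matrix `det G • 1 - Aᵀ (adj G) A` is `det G` times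
the orthogonal projection `1 - Aᵀ G⁻¹ A` onto `ker A`, but, written with the adjugate, it is a
polynomial and hence continuous function of `A`. Its rows span `ker A`, so some `n - r` of them
are linearly independent. Linear independence is an open condition, so a choice among the
selections of `n - r` rows that work, made pointwise by a finite piecewise definition, is
measurable. Rows orthogonal to those of `γ` and independent among themselves span the orthogonal
complement by a dimension count, and the stacked matrix `M` satisfies
`M Mᵀ = diag(γ γᵀ, δ δᵀ)`, which is invertible.
-/

open MeasureTheory

open Matrix Module Submodule Set

instance Matrix.instMeasurableSpace {m n α : Type*} [MeasurableSpace α] :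
    MeasurableSpace (Matrix m n α) :=
  MeasurableSpace.pi

instance Matrix.instBorelSpace {m n α : Type*} [Countable m] [Countable n] [TopologicalSpace α]
    [SecondCountableTopology α] [MeasurableSpace α] [BorelSpace α] :
    BorelSpace (Matrix m n α) :=
  Pi.borelSpace

section MeasurableEntries

variable {Ω m n α : Type*} [MeasurableSpace Ω] [MeasurableSpace α] {f : Ω → Matrix m n α}

theorem Matrix.measurable_of_entries (hf : ∀ i j, Measurable fun ω => f ω i j) : Measurable f :=
  measurable_pi_lambda _ fun i => measurable_pi_lambda _ (hf i)

theorem Measurable.matrix_entry (hf : Measurable f) (i : m) (j : n) :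
    Measurable fun ω => f ω i j :=
  (measurable_pi_apply j).comp ((measurable_pi_apply i).comp hf)

end MeasurableEntries

theorem exists_measurable_eq_of_mem_iUnion {Ω β ι : Type*} [MeasurableSpace Ω]
    [MeasurableSpace β] [Nonempty β] [Finite ι] {f : ι → Ω → β} (hf : ∀ i, Measurable (f i))
    {s : ι → Set Ω} (hs : ∀ i, MeasurableSet (s i)) :
    ∃ g : Ω → β, Measurable g ∧ ∀ ω ∈ ⋃ i, s i, ∃ i, ω ∈ s i ∧ g ω = f i ω := by
  classical
  cases nonempty_fintype ι
  suffices ∀ t : Finset ι, ∃ g : Ω → β, Measurable g ∧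
      ∀ ω ∈ ⋃ i ∈ t, s i, ∃ i, ω ∈ s i ∧ g ω = f i ω by
    simpa using this Finset.univ
  intro t
  induction t using Finset.induction_on with
  | empty => exact ⟨fun _ => Classical.arbitrary β, measurable_const, by simp⟩
  | insert a t _ ih =>
    obtain ⟨g, hg, hgs⟩ := ih
    refine ⟨(s a).piecewise (f a) g, (hf a).piecewise (hs a) hg, fun ω hω => ?_⟩
    by_cases ha : ω ∈ s a
    · exact ⟨a, ha, piecewise_eq_of_mem _ _ _ ha⟩
    · obtain ⟨i, hi, hgi⟩ := hgs ω (by simpa [ha] using hω)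
      exact ⟨i, hi, (piecewise_eq_of_notMem _ _ _ ha).trans hgi⟩

theorem exists_linearIndependent_comp_fin {K V ι : Type*} [DivisionRing K] [AddCommGroup V]
    [Module K V] [Finite ι] (v : ι → V) {k : ℕ} (hk : finrank K (span K (range v)) = k) :
    ∃ e : Fin k → ι, LinearIndependent K (v ∘ e) := by
  obtain ⟨κ, a, ha, hspan, hli⟩ := exists_linearIndependent' K v
  have : Finite κ := Finite.of_injective a ha
  cases nonempty_fintype κ
  have hcard : Fintype.card κ = k := by rw [← hk, ← hspan, finrank_span_eq_card hli]
  let σ : Fin k ≃ κ := (Fintype.equivFinOfCardEq hcard).symm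
  exact ⟨a ∘ σ, hli.comp σ σ.injective⟩

namespace Matrix

theorem coe_ker_mulVecLin_eq_orthogonal_span_row {m n R : Type*} [Fintype n] [CommRing R] (A : Matrix m n R) :
    (LinearMap.ker A.mulVecLin : Set (n → R)) =
      {v | ∀ u ∈ span R (range A.row), v ⬝ᵥ u = 0} := by
  ext v
  change A *ᵥ v = 0 ↔ span R (range A.row) ≤ LinearMap.ker (dotProductBilin R R v)
  rw [span_le, range_subset_iff, funext_iff]
  simp only [mulVec, dotProduct_comm, SetLike.mem_coe, LinearMap.mem_ker,
    dotProductBilin_apply_apply, Pi.zero_apply]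
  rfl

theorem finrank_ker_mulVecLin {m n R : Type*} [Fintype n] [Field R] (A : Matrix m n R) :
    finrank R (LinearMap.ker A.mulVecLin) = Fintype.card n - A.rank := by
  have := LinearMap.finrank_range_add_finrank_ker A.mulVecLin
  rw [finrank_fintype_fun_eq_card] at this
  rw [rank]
  omega

theorem span_row_eq_ker_of_mul_transpose_eq_zero {m n k R : Type*} [Fintype n] [Fintype k]
    [Field R] {A : Matrix m n R} {D : Matrix k n R} (hD : LinearIndependent R D.row)
    (hAD : A * Dᵀ = 0) (hcard : A.rank + Fintype.card k = Fintype.card n) :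
    span R (range D.row) = LinearMap.ker A.mulVecLin := by
  refine eq_of_le_of_finrank_eq (span_le.2 (range_subset_iff.2 fun j => ?_)) ?_
  · ext i
    simpa [mulVec, dotProduct, mul_apply] using congr_fun (congr_fun hAD i) j
  · rw [finrank_span_eq_card hD, finrank_ker_mulVecLin]
    omega

theorem isUnit_mul_transpose_of_rank_eq {m n R : Type*} [Fintype m] [Fintype n] [DecidableEq m]
    [Field R] [LinearOrder R] [IsStrictOrderedRing R] {A : Matrix m n R}
    (hA : A.rank = Fintype.card m) : IsUnit (A * Aᵀ) :=
  linearIndependent_rows_iff_isUnit.mp <| linearIndependent_iff_card_eq_finrank_span.mpr <| by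
    rw [Set.finrank, ← rank_eq_finrank_span_row, rank_self_mul_transpose, hA]

theorem isUnit_reindex_fromRows {R l m k : Type*} [CommRing R] [Fintype l] [Fintype m]
    [Fintype k] [DecidableEq l] [DecidableEq m] [DecidableEq k] (e : m ⊕ k ≃ l)
    {A : Matrix m l R} {D : Matrix k l R} (hA : IsUnit (A * Aᵀ).det)
    (hD : IsUnit (D * Dᵀ).det) (hAD : A * Dᵀ = 0) :
    IsUnit (reindex e (Equiv.refl l) (fromRows A D)) := by
  set M := reindex e (Equiv.refl l) (fromRows A D) with hMdef
  have hDA : D * Aᵀ = 0 := by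
    rw [← transpose_transpose (D * Aᵀ), transpose_mul, transpose_transpose, hAD, transpose_zero]
  have hM : M * Mᵀ = reindex e e (fromBlocks (A * Aᵀ) 0 0 (D * Dᵀ)) := by
    rw [hMdef, transpose_reindex, reindex_apply, reindex_apply, reindex_apply, submatrix_mul_equiv,
      transpose_fromRows, fromRows_mul_fromCols, hAD, hDA]
  refine isUnit_of_mul_isUnit_left (y := Mᵀ) ?_
  rw [isUnit_iff_isUnit_det, hM, det_reindex_self, det_fromBlocks_zero₂₁]
  exact hA.mul hD

section ScaledKerProj

variable {m n R : Type*} [Fintype m] [Fintype n] [DecidableEq m] [DecidableEq n]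

def scaledKerProj [CommRing R] (A : Matrix m n R) : Matrix n n R :=
  (A * Aᵀ).det • 1 - Aᵀ * adjugate (A * Aᵀ) * A

section CommRing

variable [CommRing R] (A : Matrix m n R)

theorem mul_scaledKerProj : A * scaledKerProj A = 0 := by
  rw [scaledKerProj, Matrix.mul_sub, Matrix.mul_smul, Matrix.mul_one, ← Matrix.mul_assoc,
    ← Matrix.mul_assoc, mul_adjugate, Matrix.smul_mul, Matrix.one_mul, sub_self]

theorem transpose_scaledKerProj : (scaledKerProj A)ᵀ = scaledKerProj A := by
  have hG : (A * Aᵀ)ᵀ = A * Aᵀ := by rw [transpose_mul, transpose_transpose]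
  rw [scaledKerProj, transpose_sub, transpose_smul, transpose_one, transpose_mul, transpose_mul,
    transpose_transpose, adjugate_transpose, hG, Matrix.mul_assoc]

theorem scaledKerProj_mulVec {v : n → R} (hv : A *ᵥ v = 0) :
    scaledKerProj A *ᵥ v = (A * Aᵀ).det • v := by
  rw [scaledKerProj, sub_mulVec, smul_mulVec, one_mulVec, ← mulVec_mulVec, hv, mulVec_zero,
    sub_zero]

theorem mul_transpose_submatrix_scaledKerProj {k : Type*} (e : k → n) :
    A * ((scaledKerProj A).submatrix e id)ᵀ = 0 := by
  rw [transpose_submatrix, transpose_scaledKerProj]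
  simpa [mul_scaledKerProj] using submatrix_mul_equiv A (scaledKerProj A) id (Equiv.refl n) e

theorem continuous_scaledKerProj [TopologicalSpace R] [IsTopologicalRing R] :
    Continuous (scaledKerProj : Matrix m n R → Matrix n n R) := by
  have hG : Continuous fun A : Matrix m n R => A * Aᵀ :=
    continuous_id.matrix_mul continuous_id.matrix_transpose
  exact (hG.matrix_det.smul continuous_const).sub
    ((continuous_id.matrix_transpose.matrix_mul hG.matrix_adjugate).matrix_mul continuous_id)

end CommRing

variable [Field R] {A : Matrix m n R}

theorem range_mulVecLin_scaledKerProj (hA : IsUnit (A * Aᵀ).det) :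
    LinearMap.range (scaledKerProj A).mulVecLin = LinearMap.ker A.mulVecLin := by
  refine le_antisymm ?_ fun v hv => ⟨(A * Aᵀ).det⁻¹ • v, ?_⟩
  · rintro _ ⟨v, rfl⟩
    simp only [LinearMap.mem_ker, mulVecLin_apply, mulVec_mulVec, mul_scaledKerProj,
      zero_mulVec]
  · rw [mulVecLin_apply, mulVec_smul, scaledKerProj_mulVec A hv, smul_smul,
      inv_mul_cancel₀ hA.ne_zero, one_smul]

theorem span_row_scaledKerProj (hA : IsUnit (A * Aᵀ).det) :
    span R (range (scaledKerProj A).row) = LinearMap.ker A.mulVecLin := by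
  have := range_mulVecLin (scaledKerProj A)ᵀ
  rw [col_transpose, transpose_scaledKerProj, range_mulVecLin_scaledKerProj hA] at this
  exact this.symm

end ScaledKerProj

end Matrix

theorem stmt_8_general {Ω : Type*} [MeasurableSpace Ω] (μ : Measure Ω)
    (r n : ℕ) (hrn : r < n) (γ : Ω → Matrix (Fin r) (Fin n) ℝ)
    (hγ : ∀ i j, Measurable fun ω => γ ω i j)
    (hrank : ∀ᵐ ω ∂μ, (γ ω).rank = r) :
    ∃ δ : Ω → Matrix (Fin (n - r)) (Fin n) ℝ,
      (∀ i j, Measurable fun ω => δ ω i j) ∧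
      ∀ᵐ ω ∂μ,
        (δ ω).rank = n - r ∧
        ((Submodule.span ℝ (Set.range fun i => δ ω i) : Set (Fin n → ℝ)) =
          {v : Fin n → ℝ | ∀ u ∈ Submodule.span ℝ (Set.range fun i => γ ω i),
            dotProduct v u = 0}) ∧
        γ ω * (δ ω).transpose = 0 ∧
        IsUnit ((Matrix.reindex (finSumFinEquiv.trans
            (finCongr (Nat.add_sub_cancel' hrn.le))) (Equiv.refl (Fin n)))
          (Matrix.fromRows (γ ω) (δ ω))) := by
  let D (e : Fin (n - r) → Fin n) (ω : Ω) := (scaledKerProj (γ ω)).submatrix e id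
  have hD (e) : Measurable (D e) :=
    (continuous_scaledKerProj.matrix_submatrix e id).measurable.comp (measurable_of_entries hγ)
  have hDsets (e) : MeasurableSet {ω | LinearIndependent ℝ (D e ω).row} :=
    isOpen_setOfPred_linearIndependent.measurableSet.preimage (hD e)
  obtain ⟨δ, hδ, hδD⟩ := exists_measurable_eq_of_mem_iUnion hD hDsets
  refine ⟨δ, hδ.matrix_entry, ?_⟩
  filter_upwards [hrank] with ω hω
  have hG : IsUnit (γ ω * (γ ω)ᵀ).det := (isUnit_iff_isUnit_det _).mp
    (isUnit_mul_transpose_of_rank_eq (hω.trans (Fintype.card_fin r).symm))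
  obtain ⟨e, he⟩ := exists_linearIndependent_comp_fin (scaledKerProj (γ ω)).row (k := n - r)
    (by rw [span_row_scaledKerProj hG, finrank_ker_mulVecLin, hω, Fintype.card_fin])
  obtain ⟨e', he', hδe⟩ := hδD ω (mem_iUnion.2 ⟨e, he⟩)
  rw [hδe]
  have hAD : γ ω * (D e' ω)ᵀ = 0 := mul_transpose_submatrix_scaledKerProj (γ ω) e'
  have hrankD : (D e' ω).rank = n - r := he'.rank_matrix.trans (Fintype.card_fin _)
  refine ⟨hrankD, ?_, hAD, isUnit_reindex_fromRows _ hG ?_ hAD⟩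
  · have hspan := span_row_eq_ker_of_mul_transpose_eq_zero he' hAD
      (by rw [hω, Fintype.card_fin, Fintype.card_fin]; omega)
    exact (congrArg SetLike.coe hspan).trans (coe_ker_mulVecLin_eq_orthogonal_span_row _)
  · exact (isUnit_iff_isUnit_det _).mp
      (isUnit_mul_transpose_of_rank_eq (hrankD.trans (Fintype.card_fin _).symm))

/-- Measurable selection of an orthogonal complementary full-rank matrix: given a
measurable `γ : Ω → Matrix (Fin r) (Fin n) ℝ` of full row rank `r < n` a.e., there is a
measurable `δ : Ω → Matrix (Fin (n - r)) (Fin n) ℝ` such that a.e. `δ(ω)` has rank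
`n - r`, the row span of `δ(ω)` is the orthogonal complement (for the standard inner
product, i.e. the dot product) of the row span of `γ(ω)` (equivalently `γ(ω) * δ(ω)ᵀ = 0`),
and the `n × n` matrix obtained by stacking `γ(ω)` on top of `δ(ω)` is invertible. -/
theorem stmt_8 {Ω : Type*} [MeasurableSpace Ω] (μ : Measure Ω) [IsProbabilityMeasure μ]
    (r n : ℕ) (hrn : r < n) (γ : Ω → Matrix (Fin r) (Fin n) ℝ)
    (hγ : ∀ i j, Measurable fun ω => γ ω i j)
    (hrank : ∀ᵐ ω ∂μ, (γ ω).rank = r) :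
    ∃ δ : Ω → Matrix (Fin (n - r)) (Fin n) ℝ,
      (∀ i j, Measurable fun ω => δ ω i j) ∧
      ∀ᵐ ω ∂μ,
        (δ ω).rank = n - r ∧
        ((Submodule.span ℝ (Set.range fun i => δ ω i) : Set (Fin n → ℝ)) =
          {v : Fin n → ℝ | ∀ u ∈ Submodule.span ℝ (Set.range fun i => γ ω i),
            dotProduct v u = 0}) ∧
        γ ω * (δ ω).transpose = 0 ∧
        IsUnit ((Matrix.reindex (finSumFinEquiv.trans
            (finCongr (Nat.add_sub_cancel' hrn.le))) (Equiv.refl (Fin n)))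
          (Matrix.fromRows (γ ω) (δ ω))) :=
  stmt_8_general μ r n hrn γ hγ hrank
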